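/- State-space relaxation yields an upper bound: if g : S → G is a surjective mapping of DP states such that r ∈ Δ(s) implies g(r) ∈ Δ(g(s)), and relaxed arc costs are defined by c̄(g(r), g(s)) = max{ c(p,q) : g(p)=g(r), g(q)=g(s), q ∈ S, p ∈ Δ(q) }, then the relaxed DP value satisfies f_SSR(g(s)) ≥ f_DP(s) for every state s. -/
import Mathlib


/-- State-space relaxation yields an upper bound: if `g : S → G` maps DP states so
that predecessors are preserved, relaxed costs are maxima of the original costs
over the merged state pairs, and both (acyclic, well-founded) DP recursions hold,
then the relaxed DP value bounds the original one: `f_DP s ≤ f_SSR (g s)`. -/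
theorem state_space_relaxation_upper_bound
    {S G : Type*} [Fintype S] [Fintype G] [DecidableEq S] [DecidableEq G]
    (Δ : S → Finset S) (ΔG : G → Finset G)
    (g : S → G) (hgsurj : Function.Surjective g)
    (s₀ : S) (hΔ0 : Δ s₀ = ∅)
    (hΔne : ∀ s : S, s ≠ s₀ → (Δ s).Nonempty)
    (hginit : ∀ s : S, g s = g s₀ → s = s₀)
    (hmap : ∀ s : S, ∀ r ∈ Δ s, g r ∈ ΔG (g s))
    (c : S → S → ℝ) (cbar : G → G → ℝ)
    (hcbar : ∀ π γ : G,
      ({x : ℝ | ∃ q : S, ∃ p ∈ Δ q, g p = π ∧ g q = γ ∧ x = c p q}).Nonempty →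
      IsGreatest {x : ℝ | ∃ q : S, ∃ p ∈ Δ q, g p = π ∧ g q = γ ∧ x = c p q} (cbar π γ))
    (fDP : S → ℝ) (fSSR : G → ℝ)
    (hwf : WellFounded (fun r s : S => r ∈ Δ s))
    (hwfG : WellFounded (fun π γ : G => π ∈ ΔG γ))
    (hfDP0 : fDP s₀ = 0)
    (hfDP : ∀ s : S, s ≠ s₀ →
      IsGreatest {x : ℝ | ∃ r ∈ Δ s, x = fDP r + c r s} (fDP s))
    (hfSSR0 : fSSR (g s₀) = 0)
    (hfSSR : ∀ γ : G, γ ≠ g s₀ →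
      IsGreatest {x : ℝ | ∃ π ∈ ΔG γ, x = fSSR π + cbar π γ} (fSSR γ)) :
    ∀ s : S, fDP s ≤ fSSR (g s) := by
  intro s
  induction s using hwf.induction with
  | _ s ih =>
    by_cases hs : s = s₀
    · subst hs; rw [hfDP0, hfSSR0]
    · obtain ⟨⟨r, hr, hrs⟩, -⟩ := hfDP s hs
      have hgs : g s ≠ g s₀ := fun h => hs (hginit s h)
      obtain ⟨-, hub⟩ := hfSSR (g s) hgs
      have hle : fSSR (g r) + cbar (g r) (g s) ≤ fSSR (g s) :=
        hub ⟨g r, hmap s r hr, rfl⟩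
      have hne : ({x : ℝ | ∃ q : S, ∃ p ∈ Δ q, g p = g r ∧ g q = g s ∧ x = c p q}).Nonempty :=
        ⟨c r s, s, r, hr, rfl, rfl, rfl⟩
      obtain ⟨-, hcub⟩ := hcbar (g r) (g s) hne
      have hc : c r s ≤ cbar (g r) (g s) := hcub ⟨s, r, hr, rfl, rfl, rfl⟩
      calc fDP s = fDP r + c r s := hrs
        _ ≤ fSSR (g r) + cbar (g r) (g s) := add_le_add (ih r hr) hc
        _ ≤ fSSR (g s) := hle
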